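/- If a polyhedron S in a finite-dimensional real vector space contains the origin, then its dual S* = {v : ⟨u,v⟩ ≥ -1 for all u ∈ S} also contains the origin, and (S*)* = S when S is closed and convex. -/
import Mathlib


open scoped RealInnerProductSpace

/-- The dual of a set `S ⊆ ℝⁿ`: `S* = {v : ⟨u,v⟩ ≥ -1 for all u ∈ S}`. -/
def dualSet {n : ℕ} (S : Set (EuclideanSpace ℝ (Fin n))) : Set (EuclideanSpace ℝ (Fin n)) :=
  {v | ∀ u ∈ S, ⟪u, v⟫ ≥ -1}

theorem stmt_0 {n : ℕ} (S : Set (EuclideanSpace ℝ (Fin n)))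
    (h0 : (0 : EuclideanSpace ℝ (Fin n)) ∈ S)
    (hclosed : IsClosed S) (hconv : Convex ℝ S) :
    (0 : EuclideanSpace ℝ (Fin n)) ∈ dualSet S ∧ dualSet (dualSet S) = S := by
  constructor
  · intro u hu
    simp [inner_zero_right]
  · apply Set.Subset.antisymm
    · intro v hv
      by_contra hvS
      obtain ⟨f, c, hfS, hfv⟩ := geometric_hahn_banach_closed_point hconv hclosed hvS
      have hc0 : 0 < c := by simpa using hfS 0 h0
      set w : EuclideanSpace ℝ (Fin n) :=
        (-(1/c)) • (InnerProductSpace.toDual ℝ _).symm f with hw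
      have hinner : ∀ u : EuclideanSpace ℝ (Fin n), ⟪u, w⟫ = -(1/c) * f u := by
        intro u
        rw [hw, inner_smul_right, real_inner_comm]
        simp [InnerProductSpace.toDual_symm_apply]
      have hwdual : w ∈ dualSet S := by
        intro u hu
        rw [hinner]
        have := hfS u hu
        rw [ge_iff_le, neg_le, ← neg_mul]
        calc -(-(1/c)) * f u = f u / c := by ring
        _ ≤ 1 := by rw [div_le_one hc0]; exact (hfS u hu).le
      have := hv w hwdual
      rw [real_inner_comm, hinner] at this
      have h1 : c < f v := hfv
      have h3 : (1/c) * f v ≤ 1 := by linarith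
      have h4 : f v ≤ c := by
        calc f v = c * ((1/c) * f v) := by field_simp
        _ ≤ c * 1 := by nlinarith
        _ = c := mul_one c
      linarith
    · intro u hu v hv
      have := hv u hu
      rwa [real_inner_comm]
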